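/- Suppose there exist C > 1, γ ∈ [0,1) and a current-mode-dependent memory controller Ψ_d such that ‖φ(k, σ, x₀, Ψ_d)‖ ≤ C γ^k ‖x₀‖ for all x₀, σ, k. Then the mode-dependent value function V_d satisfies the dynamic programming equation V_d(x) = ‖x‖ + max_{i ∈ Σ} min_{u ∈ ℝ^m} V_d(A_i x + B_i u) for all x ∈ ℝⁿ, where for each i ∈ Σ the minimum over u ∈ ℝ^m is attained. -/

import Mathlib

open Matrix Filter ENNReal

noncomputable section

/-- State history `[x(k), …, x(0)]` of the closed loop driven by the reversed
mode list `[i_{k-1}, …, i_0]`, under a current-mode-dependent memory controller `Ψd`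
(which also sees the current mode). -/
def memHistD {n m : ℕ} {S : Type*} (A : S → Matrix (Fin n) (Fin n) ℝ)
    (B : S → Matrix (Fin n) (Fin m) ℝ)
    (Ψd : List (EuclideanSpace ℝ (Fin n)) → List S → EuclideanSpace ℝ (Fin m))
    (x0 : EuclideanSpace ℝ (Fin n)) : List S → List (EuclideanSpace ℝ (Fin n))
  | [] => [x0]
  | i :: is =>
      (WithLp.toLp 2 ((A i).mulVec ((memHistD A B Ψd x0 is).headD 0) +
        (B i).mulVec (Ψd (memHistD A B Ψd x0 is) (i :: is)))) :: memHistD A B Ψd x0 is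

/-- Closed-loop solution `φ(k, σ, x₀, Ψd)` under the switching signal `σ`:
at each step, `Ψd` receives the current and past states `(x(k), …, x(0))`
and the current and past modes `(σ(k), …, σ(0))`. -/
def memTrajD {n m : ℕ} {S : Type*} (A : S → Matrix (Fin n) (Fin n) ℝ)
    (B : S → Matrix (Fin n) (Fin m) ℝ)
    (Ψd : List (EuclideanSpace ℝ (Fin n)) → List S → EuclideanSpace ℝ (Fin m))
    (x0 : EuclideanSpace ℝ (Fin n)) (σ : ℕ → S) (k : ℕ) : EuclideanSpace ℝ (Fin n) :=
  (memHistD A B Ψd x0 (((List.range k).reverse).map σ)).headD 0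

/-- The mode-dependent value function `V_d(x₀) = inf_{Ψd} sup_σ Σₖ ‖φ(k, σ, x₀, Ψd)‖`
(computed in `ℝ≥0∞` and converted to a real number). -/
def valFunD {n m : ℕ} {S : Type*} (A : S → Matrix (Fin n) (Fin n) ℝ)
    (B : S → Matrix (Fin n) (Fin m) ℝ) (x0 : EuclideanSpace ℝ (Fin n)) : ℝ :=
  (⨅ Ψd : List (EuclideanSpace ℝ (Fin n)) → List S → EuclideanSpace ℝ (Fin m),
    ⨆ σ : ℕ → S, ∑' k : ℕ, (‖memTrajD A B Ψd x0 σ k‖₊ : ℝ≥0∞)).toReal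


/-!
Splitting off the first step of a closed-loop run gives the dynamic programming equation for
the `ℝ≥0∞`-valued value function without any stability assumption. A controller, restricted to
the runs that start in mode `i`, is a first input followed by a controller from the next state;
conversely, a first input and a continuation controller chosen for every mode `i` glue into one
controller, and the infimum over such choices of a supremum over `i` is the supremum over `i` of
the infima, by complete distributivity of `ℝ≥0∞`.

Exponential stabilizability makes the value function finite with linear growth, and running two
controllers in superposition makes it subadditive, so the real value function is Lipschitz. It
dominates the norm, hence is coercive and attains its minimum on each affine subspace
`A i x + range (B i)`.
-/

open scoped NNReal

theorem lipschitzWith_of_subadditive_of_le_mul_norm {E : Type*} [SeminormedAddCommGroup E]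
    {f : E → ℝ} {K : ℝ≥0} (hadd : ∀ a b, f (a + b) ≤ f a + f b) (hle : ∀ a, f a ≤ K * ‖a‖) :
    LipschitzWith K f :=
  LipschitzWith.of_le_add_mul K fun a b =>
    calc f a = f (b + (a - b)) := by rw [add_sub_cancel]
      _ ≤ f b + K * ‖a - b‖ := (hadd b (a - b)).trans (add_le_add le_rfl (hle _))
      _ = f b + K * dist a b := by rw [dist_eq_norm]

theorem exists_forall_le_add_linearMap {E F : Type*} [AddCommGroup E] [Module ℝ E]
    [NormedAddCommGroup F] [NormedSpace ℝ F] [FiniteDimensional ℝ F] {f : F → ℝ}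
    (hf : Continuous f) (hcoer : Tendsto f (cocompact F) atTop) (a : F) (T : E →ₗ[ℝ] F) :
    ∃ u, ∀ v, f (a + T u) ≤ f (a + T v) := by
  let g : LinearMap.range T → ℝ := fun w => f (a + w)
  have hg : Continuous g := hf.comp (continuous_const.add continuous_subtype_val)
  have hgcoer : Tendsto g (cocompact _) atTop :=
    hcoer.comp ((Homeomorph.addLeft a).isClosedEmbedding.tendsto_cocompact.comp
      (Submodule.closed_of_finiteDimensional _).isClosedEmbedding_subtypeVal.tendsto_cocompact)
  obtain ⟨⟨_, u, rfl⟩, hmin⟩ := hg.exists_forall_le hgcoer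
  exact ⟨u, fun v => hmin ⟨T v, v, rfl⟩⟩

abbrev MemCtrlD (n m : ℕ) (S : Type*) : Type _ :=
  List (EuclideanSpace ℝ (Fin n)) → List S → EuclideanSpace ℝ (Fin m)

section ClosedLoop

variable {n m : ℕ} {S : Type*} (A : S → Matrix (Fin n) (Fin n) ℝ)
  (B : S → Matrix (Fin n) (Fin m) ℝ)

def modeStep (i : S) (x : EuclideanSpace ℝ (Fin n)) (u : EuclideanSpace ℝ (Fin m)) :
    EuclideanSpace ℝ (Fin n) :=
  WithLp.toLp 2 ((A i).mulVec x + (B i).mulVec u)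

lemma modeStep_eq_add_toLpLin (i : S) (x : EuclideanSpace ℝ (Fin n))
    (u : EuclideanSpace ℝ (Fin m)) :
    modeStep A B i x u = WithLp.toLp 2 ((A i).mulVec x) + Matrix.toLpLin 2 2 (B i) u := by
  simp [modeStep, Matrix.toLpLin_apply]

lemma headD_memHistD_append (Ψ : MemCtrlD n m S) (x : EuclideanSpace ℝ (Fin n)) (l : List S)
    (L : List (EuclideanSpace ℝ (Fin n))) :
    (memHistD A B Ψ x l ++ L).headD 0 = (memHistD A B Ψ x l).headD 0 := by
  cases l <;> simp [memHistD]

/-- Running `Ψ` from `x` after a first mode `i` is running, from the next state, a controller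
`Φ` that sees the history without its first entry. -/
lemma memHistD_append_singleton (Ψ Φ : MemCtrlD n m S) (x : EuclideanSpace ℝ (Fin n)) (i : S)
    (hΦ : ∀ hist modes, modes ≠ [] → Ψ (hist ++ [x]) (modes ++ [i]) = Φ hist modes)
    (l : List S) :
    memHistD A B Ψ x (l ++ [i]) = memHistD A B Φ (modeStep A B i x (Ψ [x] [i])) l ++ [x] := by
  induction l with
  | nil => rfl
  | cons j l ih =>
    rw [List.cons_append, memHistD, ih, headD_memHistD_append,
      ← List.cons_append (a := j) (as := l), hΦ _ _ (List.cons_ne_nil _ _)]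
    rfl

lemma tsum_enorm_memTrajD (Ψ Φ : MemCtrlD n m S) (x : EuclideanSpace ℝ (Fin n)) (σ : ℕ → S)
    (hΦ : ∀ hist modes, modes ≠ [] → Ψ (hist ++ [x]) (modes ++ [σ 0]) = Φ hist modes) :
    ∑' k, ‖memTrajD A B Ψ x σ k‖ₑ =
      ‖x‖ₑ + ∑' k,
        ‖memTrajD A B Φ (modeStep A B (σ 0) x (Ψ [x] [σ 0])) (fun j => σ (j + 1)) k‖ₑ := by
  rw [tsum_eq_zero_add' ENNReal.summable]
  congr 1
  refine tsum_congr fun k => ?_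
  have hmodes : ((List.range (k + 1)).reverse).map σ =
      ((List.range k).reverse).map (fun j => σ (j + 1)) ++ [σ 0] := by
    simp [List.range_succ_eq_map, List.map_reverse, Function.comp_def]
  simp only [memTrajD, hmodes, memHistD_append_singleton A B Ψ Φ x (σ 0) hΦ,
    headD_memHistD_append]

end ClosedLoop

section DynamicProgramming

variable {n m : ℕ} {S : Type*} (A : S → Matrix (Fin n) (Fin n) ℝ)
  (B : S → Matrix (Fin n) (Fin m) ℝ)

def eCostD (Ψ : MemCtrlD n m S) (x0 : EuclideanSpace ℝ (Fin n)) : ℝ≥0∞ :=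
  ⨆ σ : ℕ → S, ∑' k, ‖memTrajD A B Ψ x0 σ k‖ₑ

def eValFunD (x0 : EuclideanSpace ℝ (Fin n)) : ℝ≥0∞ :=
  ⨅ Ψ : MemCtrlD n m S, eCostD A B Ψ x0

lemma valFunD_eq_toReal (x : EuclideanSpace ℝ (Fin n)) :
    valFunD A B x = (eValFunD (S := S) A B x).toReal :=
  rfl

/-- Play `u i` in the first mode `i`, then hand over to `Ψ i` from the resulting state. -/
def consCtrl (u : S → EuclideanSpace ℝ (Fin m)) (Ψ : S → MemCtrlD n m S) : MemCtrlD n m S :=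
  fun hist modes => match modes.getLast?, modes.dropLast with
    | some i, [] => u i
    | some i, rest => Ψ i hist.dropLast rest
    | none, _ => 0

lemma consCtrl_append (u : S → EuclideanSpace ℝ (Fin m)) (Ψ : S → MemCtrlD n m S)
    (x : EuclideanSpace ℝ (Fin n)) (i : S) (hist : List (EuclideanSpace ℝ (Fin n)))
    {modes : List S} (hmodes : modes ≠ []) :
    consCtrl u Ψ (hist ++ [x]) (modes ++ [i]) = Ψ i hist modes := by
  obtain ⟨j, l, rfl⟩ := List.exists_cons_of_ne_nil hmodes
  simp only [consCtrl, List.getLast?_concat, List.dropLast_concat]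

lemma eCostD_consCtrl_le (u : S → EuclideanSpace ℝ (Fin m)) (Ψ : S → MemCtrlD n m S)
    (x : EuclideanSpace ℝ (Fin n)) :
    eCostD A B (consCtrl u Ψ) x ≤ ‖x‖ₑ + ⨆ i, eCostD A B (Ψ i) (modeStep A B i x (u i)) :=
  iSup_le fun σ => by
    rw [tsum_enorm_memTrajD A B _ (Ψ (σ 0)) x σ fun hist _ h => consCtrl_append u Ψ x _ hist h]
    exact add_le_add le_rfl (le_iSup_of_le (σ 0) (le_iSup_of_le (fun j => σ (j + 1)) le_rfl))

theorem eValFunD_le_enorm_add_iSup_iInf (x : EuclideanSpace ℝ (Fin n)) :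
    eValFunD A B x ≤ ‖x‖ₑ + ⨆ i, ⨅ u, eValFunD A B (modeStep A B i x u) :=
  calc eValFunD A B x
      ≤ ⨅ c : S → EuclideanSpace ℝ (Fin m) × MemCtrlD n m S,
          eCostD A B (consCtrl (fun i => (c i).1) (fun i => (c i).2)) x :=
        le_iInf fun _ => iInf_le _ _
    _ ≤ ⨅ c : S → EuclideanSpace ℝ (Fin m) × MemCtrlD n m S,
          ‖x‖ₑ + ⨆ i, eCostD A B (c i).2 (modeStep A B i x (c i).1) :=
        iInf_mono fun c => eCostD_consCtrl_le A B _ _ x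
    _ = ‖x‖ₑ + ⨆ i, ⨅ c : EuclideanSpace ℝ (Fin m) × MemCtrlD n m S,
          eCostD A B c.2 (modeStep A B i x c.1) := by
        rw [← ENNReal.add_iInf, iSup_iInf_eq]
    _ = ‖x‖ₑ + ⨆ i, ⨅ u, eValFunD A B (modeStep A B i x u) := by
        simp only [iInf_prod, eValFunD]

theorem enorm_add_iSup_iInf_le_eValFunD [Nonempty S] (x : EuclideanSpace ℝ (Fin n)) :
    ‖x‖ₑ + ⨆ i, ⨅ u, eValFunD A B (modeStep A B i x u) ≤ eValFunD A B x := by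
  rw [ENNReal.add_iSup]
  refine iSup_le fun i => le_iInf fun Ψ => ?_
  let Φ : MemCtrlD n m S := fun hist modes => Ψ (hist ++ [x]) (modes ++ [i])
  calc ‖x‖ₑ + ⨅ u, eValFunD A B (modeStep A B i x u)
      ≤ ‖x‖ₑ + eCostD A B Φ (modeStep A B i x (Ψ [x] [i])) :=
        add_le_add le_rfl ((iInf_le _ _).trans (iInf_le _ Φ))
    _ = ⨆ σ, ‖x‖ₑ + ∑' k, ‖memTrajD A B Φ (modeStep A B i x (Ψ [x] [i])) σ k‖ₑ :=
        ENNReal.add_iSup _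
    _ ≤ eCostD A B Ψ x := iSup_le fun σ => by
        let σ' : ℕ → S := fun k => Nat.casesOn k i σ
        have h := tsum_enorm_memTrajD A B Ψ Φ x σ' fun _ _ _ => rfl
        exact le_iSup_of_le σ' h.ge

theorem eValFunD_bellman [Nonempty S] (x : EuclideanSpace ℝ (Fin n)) :
    eValFunD A B x = ‖x‖ₑ + ⨆ i, ⨅ u, eValFunD A B (modeStep A B i x u) :=
  (eValFunD_le_enorm_add_iSup_iInf A B x).antisymm (enorm_add_iSup_iInf_le_eValFunD A B x)

end DynamicProgramming

section Growth

variable {n m : ℕ} {S : Type*} (A : S → Matrix (Fin n) (Fin n) ℝ)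
  (B : S → Matrix (Fin n) (Fin m) ℝ)

lemma eCostD_le_of_norm_le {C γ : ℝ} (hγ : γ ∈ Set.Ico (0 : ℝ) 1) (Ψ : MemCtrlD n m S)
    (x : EuclideanSpace ℝ (Fin n))
    (hΨ : ∀ σ k, ‖memTrajD A B Ψ x σ k‖ ≤ C * γ ^ k * ‖x‖) :
    eCostD A B Ψ x ≤ ENNReal.ofReal C * (1 - ENNReal.ofReal γ)⁻¹ * ‖x‖ₑ := by
  refine iSup_le fun σ => ?_
  calc ∑' k, ‖memTrajD A B Ψ x σ k‖ₑ
      ≤ ∑' k, ENNReal.ofReal C * ‖x‖ₑ * ENNReal.ofReal γ ^ k := by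
        refine ENNReal.tsum_le_tsum fun k => ?_
        rw [← ofReal_norm, ← ofReal_norm, ← ENNReal.ofReal_pow hγ.1, mul_right_comm,
          ← ENNReal.ofReal_mul' (pow_nonneg hγ.1 k), ← ENNReal.ofReal_mul' (norm_nonneg x)]
        exact ENNReal.ofReal_le_ofReal (hΨ σ k)
    _ = ENNReal.ofReal C * (1 - ENNReal.ofReal γ)⁻¹ * ‖x‖ₑ := by
        rw [ENNReal.tsum_mul_left, ENNReal.tsum_geometric, mul_right_comm]

theorem exists_eValFunD_le_mul_enorm {C γ : ℝ} (hγ : γ ∈ Set.Ico (0 : ℝ) 1)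
    (Ψ : MemCtrlD n m S) (hΨ : ∀ x σ k, ‖memTrajD A B Ψ x σ k‖ ≤ C * γ ^ k * ‖x‖) :
    ∃ K : ℝ≥0, ∀ x, eValFunD A B x ≤ K * ‖x‖ₑ := by
  have hK : ENNReal.ofReal C * (1 - ENNReal.ofReal γ)⁻¹ ≠ ∞ :=
    ENNReal.mul_ne_top ENNReal.ofReal_ne_top
      (ENNReal.inv_ne_top.2 (tsub_pos_of_lt (ENNReal.ofReal_lt_one.2 hγ.2)).ne')
  refine ⟨(ENNReal.ofReal C * (1 - ENNReal.ofReal γ)⁻¹).toNNReal, fun x => ?_⟩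
  rw [ENNReal.coe_toNNReal hK]
  exact (iInf_le _ Ψ).trans (eCostD_le_of_norm_le A B hγ Ψ x (hΨ x))

/-- Superposition: replay the closed loops of `Ψ₁` from `x` and of `Ψ₂` from `z` and apply the
sum of their inputs; by linearity the resulting trajectory from `x + z` is the sum of theirs. -/
def addCtrl (Ψ₁ Ψ₂ : MemCtrlD n m S) (x z : EuclideanSpace ℝ (Fin n)) : MemCtrlD n m S :=
  fun _ modes => match modes with
    | [] => 0
    | i :: is => Ψ₁ (memHistD A B Ψ₁ x is) (i :: is) + Ψ₂ (memHistD A B Ψ₂ z is) (i :: is)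

lemma memTrajD_addCtrl (Ψ₁ Ψ₂ : MemCtrlD n m S) (x z : EuclideanSpace ℝ (Fin n)) (σ : ℕ → S)
    (k : ℕ) :
    memTrajD A B (addCtrl A B Ψ₁ Ψ₂ x z) (x + z) σ k =
      memTrajD A B Ψ₁ x σ k + memTrajD A B Ψ₂ z σ k := by
  unfold memTrajD
  induction ((List.range k).reverse.map σ) with
  | nil => rfl
  | cons i is ih =>
    simp only [memHistD, List.headD_cons, ih, addCtrl, WithLp.ofLp_add, Matrix.mulVec_add,
      WithLp.toLp_add]
    abel

theorem eValFunD_add_le (x z : EuclideanSpace ℝ (Fin n)) :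
    eValFunD A B (x + z) ≤ eValFunD A B x + eValFunD A B z := by
  unfold eValFunD
  rw [ENNReal.iInf_add]
  refine le_iInf fun Ψ₁ => ?_
  rw [ENNReal.add_iInf]
  refine le_iInf fun Ψ₂ => (iInf_le _ (addCtrl A B Ψ₁ Ψ₂ x z)).trans (iSup_le fun σ => ?_)
  calc ∑' k, ‖memTrajD A B (addCtrl A B Ψ₁ Ψ₂ x z) (x + z) σ k‖ₑ
      ≤ ∑' k, (‖memTrajD A B Ψ₁ x σ k‖ₑ + ‖memTrajD A B Ψ₂ z σ k‖ₑ) :=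
        ENNReal.tsum_le_tsum fun k => memTrajD_addCtrl A B Ψ₁ Ψ₂ x z σ k ▸ enorm_add_le _ _
    _ = ∑' k, ‖memTrajD A B Ψ₁ x σ k‖ₑ + ∑' k, ‖memTrajD A B Ψ₂ z σ k‖ₑ := ENNReal.tsum_add
    _ ≤ eCostD A B Ψ₁ x + eCostD A B Ψ₂ z :=
        add_le_add (le_iSup_of_le σ le_rfl) (le_iSup_of_le σ le_rfl)

end Growth

section RealValued

variable {n m : ℕ} {S : Type*} {A : S → Matrix (Fin n) (Fin n) ℝ}
  {B : S → Matrix (Fin n) (Fin m) ℝ} {K : ℝ≥0} (hK : ∀ x, eValFunD A B x ≤ K * ‖x‖ₑ)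
include hK

lemma eValFunD_ne_top (x : EuclideanSpace ℝ (Fin n)) : eValFunD A B x ≠ ∞ :=
  ((hK x).trans_lt (ENNReal.mul_lt_top ENNReal.coe_lt_top enorm_lt_top)).ne

lemma continuous_valFunD : Continuous (valFunD (S := S) A B) := by
  have hadd : ∀ a b, valFunD A B (a + b) ≤ valFunD A B a + valFunD A B b := fun a b => by
    simp only [valFunD_eq_toReal]
    rw [← ENNReal.toReal_add (eValFunD_ne_top hK a) (eValFunD_ne_top hK b)]
    exact ENNReal.toReal_mono (ENNReal.add_ne_top.2 ⟨eValFunD_ne_top hK a, eValFunD_ne_top hK b⟩)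
      (eValFunD_add_le A B a b)
  have hle : ∀ a, valFunD A B a ≤ K * ‖a‖ := fun a => by
    simpa [valFunD_eq_toReal] using
      ENNReal.toReal_mono (ENNReal.mul_ne_top ENNReal.coe_ne_top enorm_ne_top) (hK a)
  exact (lipschitzWith_of_subadditive_of_le_mul_norm hadd hle).continuous

variable [Nonempty S]

theorem valFunD_bellman_of_le_mul_enorm (x : EuclideanSpace ℝ (Fin n)) :
    valFunD A B x = ‖x‖ + ⨆ i, ⨅ u, valFunD A B (modeStep A B i x u) := by
  have hV := eValFunD_bellman A B x
  have hsup : ⨆ i, ⨅ u, eValFunD A B (modeStep A B i x u) ≠ ∞ :=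
    ne_top_of_le_ne_top (eValFunD_ne_top hK x) (hV ▸ le_add_self)
  simp only [valFunD_eq_toReal]
  rw [hV, ENNReal.toReal_add enorm_ne_top hsup, toReal_enorm,
    ENNReal.toReal_iSup fun i => ne_top_of_le_ne_top hsup (le_iSup _ i)]
  simp only [ENNReal.toReal_iInf fun u => eValFunD_ne_top hK _]

lemma norm_le_valFunD (x : EuclideanSpace ℝ (Fin n)) : ‖x‖ ≤ valFunD A B x := by
  have h : ‖x‖ₑ ≤ eValFunD A B x := (eValFunD_bellman A B x).symm ▸ le_self_add
  rw [valFunD_eq_toReal, ← toReal_enorm]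
  exact ENNReal.toReal_mono (eValFunD_ne_top hK x) h

theorem exists_valFunD_modeStep_eq_iInf (x : EuclideanSpace ℝ (Fin n)) (i : S) :
    ∃ u₀, valFunD A B (modeStep A B i x u₀) = ⨅ u, valFunD A B (modeStep A B i x u) := by
  obtain ⟨u₀, hu₀⟩ := exists_forall_le_add_linearMap (continuous_valFunD hK)
    (tendsto_atTop_mono (norm_le_valFunD hK) tendsto_norm_cocompact_atTop)
    (WithLp.toLp 2 ((A i).mulVec x)) (Matrix.toLpLin 2 2 (B i))
  simp only [← modeStep_eq_add_toLpLin] at hu₀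
  exact ⟨u₀, (le_ciInf hu₀).antisymm
    (ciInf_le ⟨0, Set.forall_mem_range.2 fun _ => ENNReal.toReal_nonneg⟩ u₀)⟩

end RealValued

theorem valFunD_bellman_general {n m : ℕ} {S : Type*} [Nonempty S]
    (A : S → Matrix (Fin n) (Fin n) ℝ) (B : S → Matrix (Fin n) (Fin m) ℝ)
    (C γ : ℝ) (hγ : γ ∈ Set.Ico (0 : ℝ) 1)
    (Ψd : List (EuclideanSpace ℝ (Fin n)) → List S → EuclideanSpace ℝ (Fin m))
    (hΨd : ∀ (x0 : EuclideanSpace ℝ (Fin n)) (σ : ℕ → S) (k : ℕ),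
      ‖memTrajD A B Ψd x0 σ k‖ ≤ C * γ ^ k * ‖x0‖) :
    ∀ x : EuclideanSpace ℝ (Fin n),
      (valFunD A B x = ‖x‖ +
        ⨆ i : S, ⨅ u : EuclideanSpace ℝ (Fin m),
          valFunD A B (WithLp.toLp 2 ((A i).mulVec x + (B i).mulVec u))) ∧
      ∀ i : S, ∃ ustar : EuclideanSpace ℝ (Fin m),
        valFunD A B (WithLp.toLp 2 ((A i).mulVec x + (B i).mulVec ustar)) =
        ⨅ u : EuclideanSpace ℝ (Fin m),
          valFunD A B (WithLp.toLp 2 ((A i).mulVec x + (B i).mulVec u)) := by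
  obtain ⟨K, hK⟩ := exists_eValFunD_le_mul_enorm A B hγ Ψd hΨd
  exact fun x => ⟨valFunD_bellman_of_le_mul_enorm hK x, exists_valFunD_modeStep_eq_iInf hK x⟩

/-- Under exponential stabilizability by a current-mode-dependent
memory controller, the mode-dependent value function satisfies the Bellman equation
`V_d(x) = ‖x‖ + max_i min_u V_d(A_i x + B_i u)`, each inner minimum being attained. -/
theorem valFunD_bellman {n m : ℕ} (hn : 0 < n) (hm : 0 < m) {S : Type*} [Fintype S] [Nonempty S]
    (A : S → Matrix (Fin n) (Fin n) ℝ) (B : S → Matrix (Fin n) (Fin m) ℝ)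
    (C γ : ℝ) (hC : 1 < C) (hγ : γ ∈ Set.Ico (0 : ℝ) 1)
    (Ψd : List (EuclideanSpace ℝ (Fin n)) → List S → EuclideanSpace ℝ (Fin m))
    (hΨd : ∀ (x0 : EuclideanSpace ℝ (Fin n)) (σ : ℕ → S) (k : ℕ),
      ‖memTrajD A B Ψd x0 σ k‖ ≤ C * γ ^ k * ‖x0‖) :
    ∀ x : EuclideanSpace ℝ (Fin n),
      (valFunD A B x = ‖x‖ +
        ⨆ i : S, ⨅ u : EuclideanSpace ℝ (Fin m),
          valFunD A B (WithLp.toLp 2 ((A i).mulVec x + (B i).mulVec u))) ∧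
      ∀ i : S, ∃ ustar : EuclideanSpace ℝ (Fin m),
        valFunD A B (WithLp.toLp 2 ((A i).mulVec x + (B i).mulVec ustar)) =
        ⨅ u : EuclideanSpace ℝ (Fin m),
          valFunD A B (WithLp.toLp 2 ((A i).mulVec x + (B i).mulVec u)) :=
  valFunD_bellman_general A B C γ hγ Ψd hΨd
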